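/- Theorem 2.1(c). Fix t ∈ ℝ. Suppose x ∈ 𝓑_{ε1,ε2}, the separation condition σ(t) ≥ 2α/(φ'_k(t) − φ'_{k−1}(t)) holds for all t and k = 1,…,K, and 2M(t)(τ0 + λ_0(t)) ≤ μ(t). Let ε̃1 satisfy M(t)(τ0 + λ_0(t)) ≤ ε̃1 ≤ μ(t) − M(t)(τ0 + λ_0(t)); let η̂_0 = 0 and η̂_ℓ(t) = argmax_{η ∈ 𝓖_{t,ℓ}} |Ṽ_x(t,η)| for 1 ≤ ℓ ≤ K. Then for each ℓ = 0,1,…,K, |Ṽ_x(t, η̂_ℓ) − x_ℓ(t)| ≤ err_ℓ(t) + 2π I_1 A_ℓ(t) · |ĝ|^{−1}(1 − 2 err_ℓ(t)/A_ℓ(t)). -/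

import Mathlib

open MeasureTheory Real

noncomputable section

/-- The adaptive short-time Fourier transform with time-varying window width `σ`. -/
def aSTFT (x : ℝ → ℂ) (g : ℝ → ℝ) (σ : ℝ → ℝ) (t η : ℝ) : ℂ :=
  ∫ τ : ℝ, x (t + τ) * (((σ t)⁻¹ * g (τ / σ t) : ℝ) : ℂ) *
    Complex.exp (-(2 * (π : ℂ) * η * τ) * Complex.I)

/-- The Fourier transform `ĝ` of the window `g`. -/
def hatg (g : ℝ → ℝ) (ξ : ℝ) : ℂ :=
  ∫ τ : ℝ, (g τ : ℂ) * Complex.exp (-(2 * (π : ℂ) * ξ * τ) * Complex.I)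

/-- The absolute moments `I_n = ∫ |τ^n g(τ)| dτ` of the window. -/
def momentI (g : ℝ → ℝ) (n : ℕ) : ℝ := ∫ τ : ℝ, |τ| ^ n * |g τ|

/-- The `k`-th component `x_k(s) = A_k(s) e^{2πi φ_k(s)}`. -/
def xcomp (A φ : ℕ → ℝ → ℝ) (k : ℕ) (s : ℝ) : ℂ :=
  (A k s : ℂ) * Complex.exp ((2 * (π : ℂ) * φ k s) * Complex.I)

/-- `M(t) = Σ_{k=0}^K A_k(t)`. -/
def Msum (K : ℕ) (A : ℕ → ℝ → ℝ) (t : ℝ) : ℝ := ∑ k ∈ Finset.range (K + 1), A k t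

/-- `μ(t) = min_{0 ≤ k ≤ K} A_k(t)`. -/
def muMin (K : ℕ) (A : ℕ → ℝ → ℝ) (t : ℝ) : ℝ :=
  (Finset.range (K + 1)).inf' (by simp) fun k => A k t

/-- `λ_0(t) = ε1 I_1 σ(t) + π ε2 I_2 σ(t)²`. -/
def lam0 (g : ℝ → ℝ) (σ : ℝ → ℝ) (ε1 ε2 t : ℝ) : ℝ :=
  ε1 * momentI g 1 * σ t + π * ε2 * momentI g 2 * σ t ^ 2

/-- `err_ℓ(t) = M(t)λ_0(t) + Σ_{k≠ℓ} A_k(t) |ĝ(α(2|ℓ−k|−1))|`. -/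
def errl (K : ℕ) (A : ℕ → ℝ → ℝ) (g : ℝ → ℝ) (σ : ℝ → ℝ) (α ε1 ε2 : ℝ)
    (l : ℕ) (t : ℝ) : ℝ :=
  Msum K A t * lam0 g σ ε1 ε2 t +
    ∑ k ∈ (Finset.range (K + 1)).erase l,
      A k t * ‖hatg g (α * (2 * |(l : ℝ) - (k : ℝ)| - 1))‖

/-- `𝓖_t = {η : |Ṽ_x(t,η)| > ε̃1}`. -/
def Gt (x : ℝ → ℂ) (g : ℝ → ℝ) (σ : ℝ → ℝ) (t eps : ℝ) : Set ℝ :=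
  {η | eps < ‖aSTFT x g σ t η‖}

/-- `𝓖_{t,k} = {η ∈ 𝓖_t : |η − φ'_k(t)| < α/σ(t)}`. -/
def Gtk (x : ℝ → ℂ) (g : ℝ → ℝ) (σ : ℝ → ℝ) (φ : ℕ → ℝ → ℝ) (α t eps : ℝ)
    (k : ℕ) : Set ℝ :=
  {η | η ∈ Gt x g σ t eps ∧ |η - deriv (φ k) t| < α / σ t}

/-!
Near the `ℓ`-th ridge, `Ṽ_x(t, η)` is within `err_ℓ(t)` of `x_ℓ(t) ĝ(σ(t)(η - φ'_ℓ(t)))`: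
freezing each amplitude at `t` and linearizing each phase around `t` costs `A_k(t) λ_0(t)` (the
first and second absolute moments of the window absorb the `|τ|` and `τ²` errors), and the
separation condition keeps every other component at frequency distance at least
`α(2|ℓ - k| - 1)/σ(t)`, where `|ĝ|` has dropped to `|ĝ(α(2|ℓ - k| - 1))|`.

The ridge point `φ'_ℓ(t)` lies in `𝓖_{t,ℓ}` because `|Ṽ_x(t, φ'_ℓ(t))| ≥ A_ℓ - err_ℓ > ε̃1`, so the
maximizer satisfies `A_ℓ |ĝ(σ(η̂_ℓ - φ'_ℓ))| + err_ℓ ≥ |Ṽ_x(t, η̂_ℓ)| ≥ A_ℓ - err_ℓ`. Thus `|ĝ|` at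
`σ|η̂_ℓ - φ'_ℓ|` is at least `1 - 2 err_ℓ/A_ℓ`, a value between `τ0 = |ĝ(α)|` and `1 = ĝ(0)` (this is
where `2M(τ0 + λ0) ≤ μ` enters), so by the intermediate value theorem and monotonicity
`σ|η̂_ℓ - φ'_ℓ| ≤ |ĝ|⁻¹(1 - 2 err_ℓ/A_ℓ)`. Finally `|ĝ(ξ) - 1| ≤ 2π|ξ| I_1`.
-/

open Finset

lemma norm_exp_two_pi_mul_I (θ : ℝ) : ‖Complex.exp (2 * π * θ * Complex.I)‖ = 1 := by
  simp [Complex.norm_exp]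

lemma norm_exp_two_pi_mul_I_sub_le (a b : ℝ) :
    ‖Complex.exp (2 * π * a * Complex.I) - Complex.exp (2 * π * b * Complex.I)‖ ≤
      2 * π * |a - b| := by
  have hfactor : Complex.exp (2 * π * a * Complex.I) - Complex.exp (2 * π * b * Complex.I) =
      Complex.exp (2 * π * b * Complex.I) *
        (Complex.exp (Complex.I * ((2 * π * (a - b) : ℝ) : ℂ)) - 1) := by
    rw [mul_sub, ← Complex.exp_add, mul_one]
    push_cast
    ring_nf
  rw [hfactor, norm_mul, norm_exp_two_pi_mul_I, one_mul]
  refine norm_exp_I_mul_ofReal_sub_one_le.trans_eq ?_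
  rw [Real.norm_eq_abs, abs_mul, abs_of_pos two_pi_pos]

lemma abs_sub_sub_deriv_mul_le {f : ℝ → ℝ} (hf : ContDiff ℝ 2 f) {ε : ℝ}
    (hε : ∀ s, |deriv (deriv f) s| ≤ ε) (t τ : ℝ) :
    |f (t + τ) - f t - deriv f t * τ| ≤ ε * τ ^ 2 / 2 := by
  rcases eq_or_ne τ 0 with rfl | hτ
  · simp
  have ht : t ≠ t + τ := by simpa using hτ
  obtain ⟨s, -, hs⟩ := taylor_mean_remainder_lagrange_iteratedDeriv ht hf.contDiffOn
  have hlin : taylorWithinEval f 1 (Set.uIcc t (t + τ)) t (t + τ) = f t + deriv f t * τ := by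
    rw [taylorWithinEval_succ, taylor_within_zero_eval, iteratedDerivWithin_one,
      (hf.differentiable two_ne_zero t).derivWithin (uniqueDiffOn_uIcc ht t Set.left_mem_uIcc)]
    simp [mul_comm]
  rw [sub_sub, ← hlin, hs, iteratedDeriv_succ, iteratedDeriv_one, add_sub_cancel_left, abs_div,
    abs_mul, abs_pow, sq_abs]
  norm_num
  gcongr
  exact hε s

lemma mul_abs_sub_le_abs_sub_of_le_sub {f : ℕ → ℝ} {d : ℝ} {K : ℕ}
    (hstep : ∀ i < K, d ≤ f (i + 1) - f i) {j k : ℕ} (hj : j ≤ K) (hk : k ≤ K) :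
    |(k : ℝ) - j| * d ≤ |f k - f j| := by
  have hmono : ∀ {m n : ℕ}, m ≤ n → n ≤ K → ((n : ℝ) - m) * d ≤ f n - f m := by
    intro m n hmn hn
    induction n, hmn using Nat.le_induction with
    | base => simp
    | succ n hmn ih =>
      have := hstep n (by omega)
      push_cast
      linarith [ih (by omega)]
  rcases le_total j k with hjk | hkj
  · rw [abs_of_nonneg (by simpa using hjk)]
    exact (hmono hjk hk).trans (le_abs_self _)
  · rw [abs_sub_comm, abs_sub_comm (f k), abs_of_nonneg (by simpa using hkj)]
    exact (hmono hkj hj).trans (le_abs_self _)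

lemma one_le_abs_natCast_sub {k l : ℕ} (h : k ≠ l) : (1 : ℝ) ≤ |(l : ℝ) - k| := by
  exact_mod_cast Int.one_le_abs (sub_ne_zero.mpr (Int.ofNat_inj.not.mpr h.symm))

lemma le_of_le_apply_of_leftInvOn {f ginv : ℝ → ℝ} {a v w : ℝ} (hf : ContinuousOn f (Set.Icc 0 a))
    (hanti : AntitoneOn f (Set.Ici 0)) (hinv : Set.LeftInvOn ginv f (Set.Ici 0)) (ha : 0 ≤ a)
    (hv : v ∈ Set.Icc (f a) (f 0)) (hw : 0 ≤ w) (hvw : v ≤ f w) : w ≤ ginv v := by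
  obtain ⟨ξ, hξ, rfl⟩ := intermediate_value_Icc' ha hf hv
  rw [hinv hξ.1]
  by_contra! hlt
  have hinj : ginv (f w) = ginv (f ξ) := by
    rw [le_antisymm (hanti hξ.1 hw hlt.le) hvw]
  rw [hinv hξ.1, hinv (show w ∈ Set.Ici 0 from hw)] at hinj
  exact hlt.ne' hinj

section Window

variable {g : ℝ → ℝ}

lemma integral_abs_pow_mul_abs_window {s : ℝ} (hs : 0 < s) (n : ℕ) :
    ∫ τ, |τ| ^ n * |s⁻¹ * g (τ / s)| = s ^ n * momentI g n := by
  have hrw : (fun τ => |τ| ^ n * |s⁻¹ * g (τ / s)|) =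
      fun τ => (s ^ n * s⁻¹) * (|τ / s| ^ n * |g (τ / s)|) := by
    funext τ
    rw [abs_mul, abs_div, abs_of_pos hs, abs_inv, abs_of_pos hs, div_pow]
    field_simp
  rw [hrw, integral_const_mul, Measure.integral_comp_div (fun u => |u| ^ n * |g u|),
    abs_of_pos hs, smul_eq_mul, momentI]
  field_simp

lemma integrable_abs_pow_mul_abs_window {s : ℝ} (hs : s ≠ 0) {n : ℕ}
    (h : Integrable fun u => u ^ n * g u) :
    Integrable fun τ => |τ| ^ n * |s⁻¹ * g (τ / s)| := by
  have hscaled : Integrable fun τ => (s ^ n * s⁻¹) * ((τ / s) ^ n * g (τ / s)) :=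
    (h.comp_div hs).const_mul _
  refine hscaled.abs.congr (ae_of_all _ fun τ => ?_)
  dsimp only
  rw [div_pow, ← abs_pow, ← abs_mul]
  congr 1
  field_simp

lemma hatg_scale {s : ℝ} (hs : 0 < s) (ξ : ℝ) :
    ∫ τ, (((s⁻¹ * g (τ / s) : ℝ)) : ℂ) * Complex.exp (-(2 * (π : ℂ) * ξ * τ) * Complex.I) =
      hatg g (s * ξ) := by
  have hs' : (s : ℂ) ≠ 0 := by exact_mod_cast hs.ne'
  have hrw : (fun τ : ℝ => (((s⁻¹ * g (τ / s) : ℝ)) : ℂ) *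
        Complex.exp (-(2 * (π : ℂ) * ξ * τ) * Complex.I)) = fun τ => (s⁻¹ : ℂ) •
        (fun u : ℝ => (g u : ℂ) * Complex.exp (-(2 * (π : ℂ) * (s * ξ : ℝ) * u) * Complex.I))
          (τ / s) := by
    funext τ
    push_cast
    rw [smul_eq_mul, mul_assoc]
    congr 4
    field_simp
  rw [hrw, integral_smul, Measure.integral_comp_div
      (fun u : ℝ => (g u : ℂ) * Complex.exp (-(2 * (π : ℂ) * (s * ξ : ℝ) * u) * Complex.I)) s,
    abs_of_pos hs, Complex.real_smul, smul_eq_mul, inv_mul_cancel_left₀ hs', hatg]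

lemma momentI_nonneg (g : ℝ → ℝ) (n : ℕ) : 0 ≤ momentI g n :=
  integral_nonneg fun τ => by positivity

lemma hatg_zero (hgnorm : ∫ τ, g τ = 1) : hatg g 0 = 1 := by
  simp only [hatg, Complex.ofReal_zero, mul_zero, zero_mul, neg_zero, Complex.exp_zero, mul_one]
  rw [integral_complex_ofReal, hgnorm, Complex.ofReal_one]

lemma integrable_mul_exp (hg : Integrable g) (ξ : ℝ) :
    Integrable fun τ => (g τ : ℂ) * Complex.exp (-(2 * (π : ℂ) * ξ * τ) * Complex.I) :=
  (hg.ofReal.bdd_mul (c := 1) (by fun_prop)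
    (ae_of_all _ fun τ => by simp [Complex.norm_exp])).congr (ae_of_all _ fun τ => mul_comm _ _)

lemma norm_hatg_sub_hatg_zero_le (hg : Integrable g) (hg1 : Integrable fun τ => τ * g τ)
    (ξ : ℝ) : ‖hatg g ξ - hatg g 0‖ ≤ 2 * π * |ξ| * momentI g 1 := by
  have hmaj : Integrable fun τ => 2 * π * |ξ| * (|τ| ^ 1 * |g τ|) :=
    (by simpa [abs_mul] using hg1.abs : Integrable fun τ => |τ| ^ 1 * |g τ|).const_mul _
  rw [hatg, hatg, ← integral_sub (integrable_mul_exp hg ξ) (integrable_mul_exp hg 0), momentI,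
    ← integral_const_mul]
  refine (norm_integral_le_integral_norm _).trans
    (integral_mono ((integrable_mul_exp hg ξ).sub (integrable_mul_exp hg 0)).norm hmaj fun τ => ?_)
  have hphase : ∀ ξ' : ℝ, Complex.exp (-(2 * (π : ℂ) * ξ' * τ) * Complex.I) =
      Complex.exp (2 * π * ((-(ξ' * τ) : ℝ) : ℂ) * Complex.I) := fun ξ' => by
    push_cast
    ring_nf
  rw [← mul_sub, norm_mul, hphase, hphase, Complex.norm_real, Real.norm_eq_abs]
  calc |g τ| * ‖Complex.exp (2 * π * ((-(ξ * τ) : ℝ) : ℂ) * Complex.I) -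
        Complex.exp (2 * π * ((-(0 * τ) : ℝ) : ℂ) * Complex.I)‖
      ≤ |g τ| * (2 * π * |-(ξ * τ) - -(0 * τ)|) := by
        gcongr
        exact norm_exp_two_pi_mul_I_sub_le _ _
    _ = 2 * π * |ξ| * (|τ| ^ 1 * |g τ|) := by
        rw [zero_mul, neg_zero, sub_zero, abs_neg, abs_mul, pow_one]
        ring

lemma continuous_hatg (hg : Integrable g) : Continuous (hatg g) := by
  have hfourier : hatg g = FourierTransform.fourier fun τ : ℝ => (g τ : ℂ) := by
    funext ξ
    rw [Real.fourier_eq', hatg]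
    congr 1
    funext τ
    rw [smul_eq_mul, mul_comm]
    congr 2
    simp only [RCLike.inner_apply, starRingEnd_apply, star_trivial]
    push_cast
    ring
  rw [hfourier]
  exact VectorFourier.fourierIntegral_continuous Real.continuous_fourierChar
    (by exact continuous_inner) hg.ofReal

end Window

section STFT

variable {g σ : ℝ → ℝ} {t η : ℝ}

def aSTFTIntegrand (x : ℝ → ℂ) (g σ : ℝ → ℝ) (t η τ : ℝ) : ℂ :=
  x (t + τ) * (((σ t)⁻¹ * g (τ / σ t) : ℝ) : ℂ) * Complex.exp (-(2 * (π : ℂ) * η * τ) * Complex.I)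

lemma integrable_aSTFTIntegrand {y : ℝ → ℂ} {C : ℝ} (hy : Continuous y) (hC : ∀ s, ‖y s‖ ≤ C)
    (hg : Integrable g) (hσ : σ t ≠ 0) : Integrable (aSTFTIntegrand y g σ t η) := by
  have hwindow : Integrable fun τ => (((σ t)⁻¹ * g (τ / σ t) : ℝ) : ℂ) :=
    ((hg.comp_div hσ).const_mul _).ofReal
  refine (hwindow.bdd_mul (c := C)
    (f := fun τ => y (t + τ) * Complex.exp (-(2 * (π : ℂ) * η * τ) * Complex.I)) (by fun_prop)
    (ae_of_all _ fun τ => by simpa [Complex.norm_exp] using hC (t + τ))).congr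
    (ae_of_all _ fun τ => ?_)
  simp only [aSTFTIntegrand]
  ring

lemma aSTFT_finset_sum {ι : Type*} (S : Finset ι) {y : ι → ℝ → ℂ}
    (hy : ∀ k ∈ S, Integrable (aSTFTIntegrand (y k) g σ t η)) :
    aSTFT (fun s => ∑ k ∈ S, y k s) g σ t η = ∑ k ∈ S, aSTFT (y k) g σ t η := by
  simp only [aSTFT, Finset.sum_mul]
  exact integral_finsetSum S hy

lemma aSTFT_linear_phase (hσ : 0 < σ t) (c : ℂ) (ν : ℝ) :
    aSTFT (fun s => c * Complex.exp (2 * π * (ν * (s - t)) * Complex.I)) g σ t η =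
      c * hatg g (σ t * (η - ν)) := by
  rw [← hatg_scale hσ, ← integral_const_mul, aSTFT]
  congr 1
  funext τ
  have hphase : Complex.exp (2 * π * (ν * τ) * Complex.I) *
      Complex.exp (-(2 * π * η * τ) * Complex.I) =
        Complex.exp (-(2 * π * ((η - ν : ℝ) : ℂ) * τ) * Complex.I) := by
    rw [← Complex.exp_add]
    push_cast
    ring_nf
  simp only [Complex.ofReal_add, add_sub_cancel_left]
  linear_combination (c * (((σ t)⁻¹ * g (τ / σ t) : ℝ) : ℂ)) * hphase

lemma norm_aSTFT_sub_le {y z : ℝ → ℂ} {a b : ℝ} (hy : Integrable (aSTFTIntegrand y g σ t η))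
    (hz : Integrable (aSTFTIntegrand z g σ t η))
    (hyz : ∀ τ, ‖y (t + τ) - z (t + τ)‖ ≤ a * |τ| + b * τ ^ 2)
    (hg1 : Integrable fun τ => τ * g τ) (hg2 : Integrable fun τ => τ ^ 2 * g τ) (hσ : 0 < σ t) :
    ‖aSTFT y g σ t η - aSTFT z g σ t η‖ ≤ a * momentI g 1 * σ t + b * momentI g 2 * σ t ^ 2 := by
  have h1 := integrable_abs_pow_mul_abs_window (g := g) hσ.ne' (n := 1) (by simpa using hg1)
  have h2 := integrable_abs_pow_mul_abs_window (g := g) hσ.ne' hg2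
  have hmaj : ∫ τ, a * (|τ| ^ 1 * |(σ t)⁻¹ * g (τ / σ t)|) + b * (|τ| ^ 2 * |(σ t)⁻¹ * g (τ / σ t)|)
      = a * momentI g 1 * σ t + b * momentI g 2 * σ t ^ 2 := by
    rw [integral_add (h1.const_mul a) (h2.const_mul b), integral_const_mul, integral_const_mul,
      integral_abs_pow_mul_abs_window hσ, integral_abs_pow_mul_abs_window hσ]
    ring
  rw [← hmaj]
  change ‖(∫ τ, aSTFTIntegrand y g σ t η τ) - ∫ τ, aSTFTIntegrand z g σ t η τ‖ ≤ _
  rw [← integral_sub hy hz]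
  refine (norm_integral_le_integral_norm _).trans
    (integral_mono (hy.sub hz).norm ((h1.const_mul a).add (h2.const_mul b)) fun τ => ?_)
  rw [aSTFTIntegrand, aSTFTIntegrand, ← sub_mul, ← sub_mul, norm_mul, norm_mul,
    Complex.norm_real, Real.norm_eq_abs]
  have hE : ‖Complex.exp (-(2 * (π : ℂ) * η * τ) * Complex.I)‖ = 1 := by simp [Complex.norm_exp]
  rw [hE, mul_one]
  calc ‖y (t + τ) - z (t + τ)‖ * |(σ t)⁻¹ * g (τ / σ t)|
      ≤ (a * |τ| + b * τ ^ 2) * |(σ t)⁻¹ * g (τ / σ t)| := by gcongr; exact hyz τ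
    _ = _ := by rw [← sq_abs τ]; ring

end STFT

section Signal

lemma abs_phase_sub_linear_le {K : ℕ} {φ : ℕ → ℝ → ℝ} {ε2 : ℝ} (hφ0 : ∀ s, φ 0 s = 0)
    (hφreg : ∀ k ≤ K, ContDiff ℝ 2 (φ k))
    (hφ'' : ∀ k, 1 ≤ k → k ≤ K → ∀ s, |deriv (deriv (φ k)) s| ≤ ε2) (hε2 : 0 ≤ ε2) {k : ℕ}
    (hk : k ≤ K) (t τ : ℝ) : |φ k (t + τ) - φ k t - deriv (φ k) t * τ| ≤ ε2 * τ ^ 2 / 2 := by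
  rcases Nat.eq_zero_or_pos k with rfl | hk0
  · simp only [show φ 0 = 0 from funext hφ0, Pi.zero_apply, deriv_zero, sub_zero, zero_mul,
      abs_zero]
    positivity
  · exact abs_sub_sub_deriv_mul_le (hφreg k hk) (hφ'' k hk0 hk) t τ

variable {K : ℕ} {A φ : ℕ → ℝ → ℝ} {g σ : ℝ → ℝ} {ε1 ε2 t η : ℝ}

lemma norm_xcomp (A φ : ℕ → ℝ → ℝ) (k : ℕ) (s : ℝ) : ‖xcomp A φ k s‖ = |A k s| := by
  rw [xcomp, norm_mul, norm_exp_two_pi_mul_I, mul_one, Complex.norm_real, Real.norm_eq_abs]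

lemma continuous_xcomp {k : ℕ} (hA : Continuous (A k)) (hφ : Continuous (φ k)) :
    Continuous (xcomp A φ k) := by
  unfold xcomp
  fun_prop

lemma norm_xcomp_sub_linear_phase_le {k : ℕ} {τ ν : ℝ}
    (hlip : |A k (t + τ) - A k t| ≤ ε1 * |τ| * A k t)
    (htay : |φ k (t + τ) - φ k t - ν * τ| ≤ ε2 * τ ^ 2 / 2) (hA : 0 ≤ A k t) :
    ‖xcomp A φ k (t + τ) - xcomp A φ k t * Complex.exp (2 * π * (ν * τ) * Complex.I)‖ ≤
      A k t * ε1 * |τ| + A k t * π * ε2 * τ ^ 2 := by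
  have hsplit : xcomp A φ k (t + τ) - xcomp A φ k t * Complex.exp (2 * π * (ν * τ) * Complex.I) =
      ((A k (t + τ) - A k t : ℝ) : ℂ) * Complex.exp (2 * π * φ k (t + τ) * Complex.I) +
        (A k t : ℂ) * (Complex.exp (2 * π * φ k (t + τ) * Complex.I) -
          Complex.exp (2 * π * ((φ k t + ν * τ : ℝ) : ℂ) * Complex.I)) := by
    simp only [xcomp, Complex.ofReal_sub, Complex.ofReal_add, Complex.ofReal_mul]
    rw [mul_assoc (A k t : ℂ), ← Complex.exp_add]
    ring_nf
  have hphase := norm_exp_two_pi_mul_I_sub_le (φ k (t + τ)) (φ k t + ν * τ)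
  rw [show φ k (t + τ) - (φ k t + ν * τ) = φ k (t + τ) - φ k t - ν * τ by ring] at hphase
  rw [hsplit]
  refine (norm_add_le _ _).trans ?_
  rw [norm_mul, norm_mul, norm_exp_two_pi_mul_I, Complex.norm_real, Complex.norm_real,
    Real.norm_eq_abs, Real.norm_eq_abs, abs_of_nonneg hA, mul_one]
  calc |A k (t + τ) - A k t| + A k t * ‖_ - _‖
      ≤ ε1 * |τ| * A k t + A k t * (2 * π * (ε2 * τ ^ 2 / 2)) := by
        gcongr
        exact hphase.trans (by gcongr)
    _ = _ := by ring

lemma norm_aSTFT_xcomp_sub_le (hg : Integrable g) (hg1 : Integrable fun τ => τ * g τ)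
    (hg2 : Integrable fun τ => τ ^ 2 * g τ) (hσ : 0 < σ t) {k : ℕ} {ν C : ℝ}
    (hAc : Continuous (A k)) (hφc : Continuous (φ k))
    (hC : ∀ s, |A k s| ≤ C) (hlip : ∀ τ, |A k (t + τ) - A k t| ≤ ε1 * |τ| * A k t)
    (htay : ∀ τ, |φ k (t + τ) - φ k t - ν * τ| ≤ ε2 * τ ^ 2 / 2) (hA : 0 ≤ A k t) :
    ‖aSTFT (xcomp A φ k) g σ t η - xcomp A φ k t * hatg g (σ t * (η - ν))‖ ≤
      A k t * lam0 g σ ε1 ε2 t := by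
  rw [← aSTFT_linear_phase hσ]
  have hint := integrable_aSTFTIntegrand (η := η) (continuous_xcomp hAc hφc)
    (fun s => (norm_xcomp A φ k s).trans_le (hC s)) hg hσ.ne'
  have hint_lin := integrable_aSTFTIntegrand (η := η) (g := g)
    (y := fun s => xcomp A φ k t * Complex.exp (2 * π * (ν * (s - t)) * Complex.I))
    (C := ‖xcomp A φ k t‖) (by fun_prop) (fun s => by simp [Complex.norm_exp]) hg hσ.ne'
  refine (norm_aSTFT_sub_le (a := A k t * ε1) (b := A k t * π * ε2) hint hint_lin (fun τ => ?_)
    hg1 hg2 hσ).trans_eq (by unfold lam0; ring)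
  simpa only [Complex.ofReal_add, add_sub_cancel_left] using
    norm_xcomp_sub_linear_phase_le (hlip τ) (htay τ) hA

lemma norm_aSTFT_sub_sum_le (hg : Integrable g) (hg1 : Integrable fun τ => τ * g τ)
    (hg2 : Integrable fun τ => τ ^ 2 * g τ) (hσ : 0 < σ t) {x : ℝ → ℂ}
    (hx : ∀ s, x s = ∑ k ∈ range (K + 1), xcomp A φ k s)
    (hAc : ∀ k ≤ K, Continuous (A k)) (hφc : ∀ k ≤ K, Continuous (φ k))
    (hAbdd : ∀ k ≤ K, ∃ C, ∀ s, |A k s| ≤ C)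
    (hlip : ∀ k ≤ K, ∀ τ, |A k (t + τ) - A k t| ≤ ε1 * |τ| * A k t)
    (htay : ∀ k ≤ K, ∀ τ, |φ k (t + τ) - φ k t - deriv (φ k) t * τ| ≤ ε2 * τ ^ 2 / 2)
    (hA : ∀ k ≤ K, 0 ≤ A k t) (η : ℝ) :
    ‖aSTFT x g σ t η - ∑ k ∈ range (K + 1), xcomp A φ k t * hatg g (σ t * (η - deriv (φ k) t))‖ ≤
      Msum K A t * lam0 g σ ε1 ε2 t := by
  have hle : ∀ k ∈ range (K + 1), k ≤ K := fun k hk => Nat.lt_succ_iff.mp (mem_range.mp hk)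
  have hint : ∀ k ∈ range (K + 1), Integrable (aSTFTIntegrand (xcomp A φ k) g σ t η) := by
    intro k hk
    obtain ⟨C, hC⟩ := hAbdd k (hle k hk)
    exact integrable_aSTFTIntegrand (continuous_xcomp (hAc k (hle k hk)) (hφc k (hle k hk)))
      (fun s => (norm_xcomp A φ k s).trans_le (hC s)) hg hσ.ne'
  rw [show x = fun s => ∑ k ∈ range (K + 1), xcomp A φ k s from funext hx,
    aSTFT_finset_sum _ hint, ← sum_sub_distrib, Msum, sum_mul]
  refine (norm_sum_le _ _).trans (sum_le_sum fun k hk => ?_)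
  obtain ⟨C, hC⟩ := hAbdd k (hle k hk)
  exact norm_aSTFT_xcomp_sub_le hg hg1 hg2 hσ (hAc k (hle k hk)) (hφc k (hle k hk)) hC
    (hlip k (hle k hk)) (htay k (hle k hk)) (hA k (hle k hk))

end Signal

section Ridge

variable {g : ℝ → ℝ}

lemma norm_hatg_abs (hgeven : ∀ ξ, ‖hatg g (-ξ)‖ = ‖hatg g ξ‖) (ξ : ℝ) :
    ‖hatg g |ξ|‖ = ‖hatg g ξ‖ := by
  rcases le_total 0 ξ with h | h
  · rw [abs_of_nonneg h]
  · rw [abs_of_nonpos h, hgeven]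

lemma norm_hatg_le_of_le_abs (hgeven : ∀ ξ, ‖hatg g (-ξ)‖ = ‖hatg g ξ‖)
    (hgdec : ∀ ξ1 ξ2, 0 ≤ ξ1 → ξ1 ≤ ξ2 → ‖hatg g ξ2‖ ≤ ‖hatg g ξ1‖) {u v : ℝ} (hv : 0 ≤ v)
    (hvu : v ≤ |u|) : ‖hatg g u‖ ≤ ‖hatg g v‖ := by
  rw [← norm_hatg_abs hgeven u]
  exact hgdec v |u| hv hvu

lemma norm_sub_le_of_near_ridge {ginv : ℝ → ℝ} {V : ℝ → ℂ} {c : ℂ} {s ν α a e η : ℝ}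
    (hg : Integrable g) (hg1 : Integrable fun τ => τ * g τ) (hgnorm : ∫ τ, g τ = 1)
    (hgeven : ∀ ξ, ‖hatg g (-ξ)‖ = ‖hatg g ξ‖)
    (hgdec : ∀ ξ1 ξ2, 0 ≤ ξ1 → ξ1 ≤ ξ2 → ‖hatg g ξ2‖ ≤ ‖hatg g ξ1‖)
    (hginv : ∀ ξ, 0 ≤ ξ → ginv ‖hatg g ξ‖ = ξ) (hs : 0 < s) (hc : ‖c‖ = a) (ha : 0 < a)
    (hnear : ∀ η', |η' - ν| < α / s → ‖V η' - c * hatg g (s * (η' - ν))‖ ≤ e)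
    (hη : |η - ν| < α / s) (hmax : ‖V ν‖ ≤ ‖V η‖) (hv : ‖hatg g α‖ ≤ 1 - 2 * e / a) :
    ‖V η - c‖ ≤ e + 2 * π * momentI g 1 * a * ginv (1 - 2 * e / a) := by
  have hαs : 0 < α / s := (abs_nonneg _).trans_lt hη
  have hridge : ‖V ν - c‖ ≤ e := by
    simpa [hatg_zero hgnorm] using hnear ν (by simpa using hαs)
  have he : 0 ≤ 2 * e / a := by have := (norm_nonneg _).trans hridge; positivity
  set ξ := s * (η - ν)
  have hpeak : 1 - 2 * e / a ≤ ‖hatg g |ξ|‖ := by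
    refine le_of_mul_le_mul_left ?_ ha
    rw [mul_sub, mul_one, mul_div_cancel₀ _ ha.ne', norm_hatg_abs hgeven]
    have hlow := norm_sub_norm_le c (V ν)
    have hup := norm_sub_norm_le (V η) (c * hatg g ξ)
    rw [norm_sub_rev, hc] at hlow
    rw [norm_mul, hc] at hup
    linarith [hnear η hη]
  have hwidth : |ξ| ≤ ginv (1 - 2 * e / a) :=
    le_of_le_apply_of_leftInvOn (f := fun ξ => ‖hatg g ξ‖) (continuous_hatg hg).norm.continuousOn
      (fun ξ1 hξ1 ξ2 _ hξ => hgdec ξ1 ξ2 hξ1 hξ) (fun ξ hξ => hginv ξ hξ)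
      ((div_pos_iff_of_pos_right hs).mp hαs).le
      ⟨hv, by simp only [hatg_zero hgnorm, norm_one]; linarith⟩ (abs_nonneg _) hpeak
  calc ‖V η - c‖ = ‖(V η - c * hatg g ξ) + c * (hatg g ξ - hatg g 0)‖ := by
        rw [hatg_zero hgnorm]; ring_nf
    _ ≤ e + a * (2 * π * |ξ| * momentI g 1) := by
        refine (norm_add_le _ _).trans (add_le_add (hnear η hη) ?_)
        rw [norm_mul, hc]
        gcongr
        exact norm_hatg_sub_hatg_zero_le hg hg1 ξ
    _ ≤ e + 2 * π * momentI g 1 * a * ginv (1 - 2 * e / a) := by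
        have := momentI_nonneg g 1
        rw [show a * (2 * π * |ξ| * momentI g 1) = 2 * π * momentI g 1 * a * |ξ| by ring]
        gcongr

end Ridge

section Separation

variable {K : ℕ} {A φ : ℕ → ℝ → ℝ} {g σ : ℝ → ℝ} {α ε1 ε2 t : ℝ}

lemma deriv_succ_sub_deriv_pos (hφ0 : ∀ s, φ 0 s = 0)
    (hφ'pos : ∀ k, 1 ≤ k → k ≤ K → ∃ c > 0, ∀ s, c ≤ deriv (φ k) s)
    (hfreq : ∃ d > 0, ∀ k, 2 ≤ k → k ≤ K → ∀ s, d ≤ deriv (φ k) s - deriv (φ (k - 1)) s)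
    {i : ℕ} (hi : i < K) (s : ℝ) : 0 < deriv (φ (i + 1)) s - deriv (φ i) s := by
  rcases i with _ | i
  · obtain ⟨c, hc, hcle⟩ := hφ'pos 1 le_rfl hi
    simpa [show φ 0 = 0 from funext hφ0] using hc.trans_le (hcle s)
  · obtain ⟨d, hd, hdle⟩ := hfreq
    exact hd.trans_le (hdle (i + 2) (by omega) hi s)

lemma abs_natCast_sub_mul_le_abs_deriv_sub
    (hgap : ∀ i < K, 0 < deriv (φ (i + 1)) t - deriv (φ i) t)
    (hsep : ∀ k, 1 ≤ k → k ≤ K → 2 * α / (deriv (φ k) t - deriv (φ (k - 1)) t) ≤ σ t)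
    (hσ : 0 < σ t) {j k : ℕ} (hj : j ≤ K) (hk : k ≤ K) :
    |(k : ℝ) - j| * (2 * α / σ t) ≤ |deriv (φ k) t - deriv (φ j) t| := by
  refine mul_abs_sub_le_abs_sub_of_le_sub (f := fun i => deriv (φ i) t) (fun i hi => ?_) hj hk
  have := hsep (i + 1) (by omega) hi
  rw [Nat.add_sub_cancel, div_le_iff₀ (hgap i hi)] at this
  rw [div_le_iff₀ hσ]
  linarith

lemma errl_le (hA : ∀ k ≤ K, 0 ≤ A k t)
    (hgdec : ∀ ξ1 ξ2, 0 ≤ ξ1 → ξ1 ≤ ξ2 → ‖hatg g ξ2‖ ≤ ‖hatg g ξ1‖) (hα : 0 ≤ α) {l : ℕ}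
    (hl : l ≤ K) :
    errl K A g σ α ε1 ε2 l t ≤
      Msum K A t * lam0 g σ ε1 ε2 t + (Msum K A t - A l t) * ‖hatg g α‖ := by
  rw [errl, Msum, ← sum_erase_eq_sub (mem_range.mpr (Nat.lt_succ_of_le hl))]
  refine add_le_add le_rfl ((sum_le_sum fun k hk => ?_).trans_eq (sum_mul _ _ _).symm)
  have hkK : k ≤ K := Nat.lt_succ_iff.mp (mem_range.mp (mem_of_mem_erase hk))
  refine mul_le_mul_of_nonneg_left (hgdec α _ hα (le_mul_of_one_le_right hα ?_)) (hA k hkK)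
  linarith [one_le_abs_natCast_sub (ne_of_mem_erase hk)]

lemma norm_aSTFT_sub_xcomp_mul_hatg_le_errl {x : ℝ → ℂ} {η : ℝ} {l : ℕ}
    (happrox : ‖aSTFT x g σ t η -
      ∑ k ∈ range (K + 1), xcomp A φ k t * hatg g (σ t * (η - deriv (φ k) t))‖ ≤
        Msum K A t * lam0 g σ ε1 ε2 t)
    (hsep : ∀ k ≤ K, |(k : ℝ) - l| * (2 * α / σ t) ≤ |deriv (φ k) t - deriv (φ l) t|)
    (hA : ∀ k ≤ K, 0 ≤ A k t) (hgeven : ∀ ξ, ‖hatg g (-ξ)‖ = ‖hatg g ξ‖)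
    (hgdec : ∀ ξ1 ξ2, 0 ≤ ξ1 → ξ1 ≤ ξ2 → ‖hatg g ξ2‖ ≤ ‖hatg g ξ1‖) (hα : 0 ≤ α)
    (hσ : 0 < σ t) (hl : l ≤ K) (hη : |η - deriv (φ l) t| < α / σ t) :
    ‖aSTFT x g σ t η - xcomp A φ l t * hatg g (σ t * (η - deriv (φ l) t))‖ ≤
      errl K A g σ α ε1 ε2 l t := by
  set T := fun k => xcomp A φ k t * hatg g (σ t * (η - deriv (φ k) t)) with hT
  rw [← sum_erase_add _ _ (mem_range.mpr (Nat.lt_succ_of_le hl))] at happrox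
  have hsplit : aSTFT x g σ t η - T l = (aSTFT x g σ t η -
      (∑ k ∈ (range (K + 1)).erase l, T k + T l)) + ∑ k ∈ (range (K + 1)).erase l, T k := by ring
  rw [hsplit, errl]
  refine (norm_add_le _ _).trans
    (add_le_add happrox ((norm_sum_le _ _).trans (sum_le_sum fun k hk => ?_)))
  obtain ⟨hkl, hk⟩ := mem_erase.mp hk
  have hkK : k ≤ K := Nat.lt_succ_iff.mp (mem_range.mp hk)
  have hlk := one_le_abs_natCast_sub hkl
  rw [hT, norm_mul, norm_xcomp, abs_of_nonneg (hA k hkK)]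
  refine mul_le_mul_of_nonneg_left (norm_hatg_le_of_le_abs hgeven hgdec
    (mul_nonneg hα (by linarith)) ?_) (hA k hkK)
  have hfar : α / σ t * (2 * |(l : ℝ) - k| - 1) ≤ |η - deriv (φ k) t| := by
    have h1 := hsep k hkK
    have h2 := abs_sub_le (deriv (φ k) t) η (deriv (φ l) t)
    rw [abs_sub_comm (k : ℝ), mul_div_assoc] at h1
    rw [abs_sub_comm (deriv (φ k) t) η] at h2
    linarith
  calc α * (2 * |(l : ℝ) - k| - 1) = σ t * (α / σ t * (2 * |(l : ℝ) - k| - 1)) := by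
        field_simp
    _ ≤ |σ t * (η - deriv (φ k) t)| := by
        rw [abs_mul, abs_of_pos hσ]
        gcongr

end Separation

theorem thm2_1c_general (K : ℕ) (A φ : ℕ → ℝ → ℝ) (ε1 ε2 : ℝ) (x : ℝ → ℂ)
    (g : ℝ → ℝ) (σ : ℝ → ℝ) (τ0 α t epst : ℝ)
    (hε2 : 0 < ε2)
    (hAreg : ∀ k ≤ K, ContDiff ℝ 1 (A k))
    (hAbdd : ∀ k ≤ K, ∃ C, ∀ s, |A k s| ≤ C)
    (hφreg : ∀ k ≤ K, ContDiff ℝ 2 (φ k))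
    (hφ0 : ∀ s, φ 0 s = 0)
    (hApos : ∀ k ≤ K, ∀ s, 0 < A k s)
    (hφ'pos : ∀ k, 1 ≤ k → k ≤ K → ∃ c > 0, ∀ s, c ≤ deriv (φ k) s)
    (hfreq : ∃ d > 0, ∀ k, 2 ≤ k → k ≤ K → ∀ s, d ≤ deriv (φ k) s - deriv (φ (k - 1)) s)
    (hAlip : ∀ k ≤ K, ∀ s τ, |A k (s + τ) - A k s| ≤ ε1 * |τ| * A k s)
    (hφ'' : ∀ k, 1 ≤ k → k ≤ K → ∀ s, |deriv (deriv (φ k)) s| ≤ ε2)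
    (hx : ∀ s, x s = ∑ k ∈ Finset.range (K + 1), xcomp A φ k s)
    (hgint : Integrable g)
    (hgI1 : Integrable fun τ : ℝ => τ * g τ)
    (hgI2 : Integrable fun τ : ℝ => τ ^ 2 * g τ)
    (hgnorm : (∫ τ : ℝ, g τ) = 1)
    (hgeven : ∀ ξ, ‖hatg g (-ξ)‖ = ‖hatg g ξ‖)
    (hgdec : ∀ ξ1 ξ2, 0 ≤ ξ1 → ξ1 ≤ ξ2 → ‖hatg g ξ2‖ ≤ ‖hatg g ξ1‖)
    (hτ0 : 0 < τ0)
    (hα : 0 < α) (hgα : ‖hatg g α‖ = τ0)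
    (hσ : ∀ s, 0 < σ s)
    (hsep : ∀ s, ∀ k, 1 ≤ k → k ≤ K →
      2 * α / (deriv (φ k) s - deriv (φ (k - 1)) s) ≤ σ s)
    (hmain : 2 * Msum K A t * (τ0 + lam0 g σ ε1 ε2 t) ≤ muMin K A t)
    (heps2 : epst ≤ muMin K A t - Msum K A t * (τ0 + lam0 g σ ε1 ε2 t))
    (ginv : ℝ → ℝ)
    (hginv : ∀ ξ, 0 ≤ ξ → ginv ‖hatg g ξ‖ = ξ)
    (ηhat : ℕ → ℝ)
    (hηmem : ∀ l, 1 ≤ l → l ≤ K → ηhat l ∈ Gtk x g σ φ α t epst l)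
    (hηmax : ∀ l, 1 ≤ l → l ≤ K → ∀ η ∈ Gtk x g σ φ α t epst l,
      ‖aSTFT x g σ t η‖ ≤ ‖aSTFT x g σ t (ηhat l)‖)
    (hη0 : ηhat 0 = 0)
    :
    ∀ l ≤ K,
      ‖aSTFT x g σ t (ηhat l) - xcomp A φ l t‖ ≤
        errl K A g σ α ε1 ε2 l t +
          2 * π * momentI g 1 * A l t *
            ginv (1 - 2 * errl K A g σ α ε1 ε2 l t / A l t) := by
  intro l hl
  have hσt := hσ t
  have hA : ∀ k ≤ K, 0 ≤ A k t := fun k hk => (hApos k hk t).le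
  have hAl := hApos l hl t
  have hnear : ∀ η, |η - deriv (φ l) t| < α / σ t →
      ‖aSTFT x g σ t η - xcomp A φ l t * hatg g (σ t * (η - deriv (φ l) t))‖ ≤
        errl K A g σ α ε1 ε2 l t := fun η hη =>
    norm_aSTFT_sub_xcomp_mul_hatg_le_errl
      (norm_aSTFT_sub_sum_le hgint hgI1 hgI2 hσt hx (fun k hk => (hAreg k hk).continuous)
        (fun k hk => (hφreg k hk).continuous) hAbdd (fun k hk => hAlip k hk t)
        (fun k hk => abs_phase_sub_linear_le hφ0 hφreg hφ'' hε2.le hk t) hA η)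
      (fun k hk => abs_natCast_sub_mul_le_abs_deriv_sub
        (fun i hi => deriv_succ_sub_deriv_pos hφ0 hφ'pos hfreq hi t) (hsep t) hσt hl hk)
      hA hgeven hgdec hα.le hσt hl hη
  have herr := hgα ▸ errl_le (σ := σ) (ε1 := ε1) (ε2 := ε2) hA hgdec hα.le hl
  have hμ : muMin K A t ≤ A l t := inf'_le _ (mem_range.mpr (Nat.lt_succ_of_le hl))
  have hα' : 0 < α / σ t := div_pos hα hσt
  have hxl : ‖xcomp A φ l t‖ = A l t := by rw [norm_xcomp, abs_of_pos hAl]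
  have hmax : |ηhat l - deriv (φ l) t| < α / σ t ∧
      ‖aSTFT x g σ t (deriv (φ l) t)‖ ≤ ‖aSTFT x g σ t (ηhat l)‖ := by
    rcases Nat.eq_zero_or_pos l with rfl | hl0
    · simpa [hη0, show φ 0 = 0 from funext hφ0] using hα'
    · refine ⟨(hηmem l hl0 hl).2, hηmax l hl0 hl _ ⟨?_, by simpa using hα'⟩⟩
      have hridge := hnear (deriv (φ l) t) (by simpa using hα')
      rw [sub_self, mul_zero, hatg_zero hgnorm, mul_one] at hridge
      have := norm_sub_norm_le (xcomp A φ l t) (aSTFT x g σ t (deriv (φ l) t))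
      rw [norm_sub_rev, hxl] at this
      show epst < _
      linarith [mul_pos hAl hτ0]
  have hv : ‖hatg g α‖ ≤ 1 - 2 * errl K A g σ α ε1 ε2 l t / A l t := by
    rw [hgα, le_sub_iff_add_le, ← le_sub_iff_add_le', div_le_iff₀ hAl]
    linarith [mul_pos hAl hτ0]
  exact norm_sub_le_of_near_ridge hgint hgI1 hgnorm hgeven hgdec hginv hσt hxl hAl hnear hmax.1
    hmax.2 hv

theorem thm2_1c (K : ℕ) (A φ : ℕ → ℝ → ℝ) (ε1 ε2 : ℝ) (x : ℝ → ℂ)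
    (g : ℝ → ℝ) (σ : ℝ → ℝ) (τ0 α t epst : ℝ)
    (hε1 : 0 < ε1) (hε2 : 0 < ε2)
    (hAreg : ∀ k ≤ K, ContDiff ℝ 1 (A k))
    (hAbdd : ∀ k ≤ K, ∃ C, ∀ s, |A k s| ≤ C)
    (hφreg : ∀ k ≤ K, ContDiff ℝ 2 (φ k))
    (hφ0 : ∀ s, φ 0 s = 0)
    (hApos : ∀ k ≤ K, ∀ s, 0 < A k s)
    (hφ'pos : ∀ k, 1 ≤ k → k ≤ K → ∃ c > 0, ∀ s, c ≤ deriv (φ k) s)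
    (hφ'bdd : ∀ k, 1 ≤ k → k ≤ K → ∃ C, ∀ s, deriv (φ k) s ≤ C)
    (hfreq : ∃ d > 0, ∀ k, 2 ≤ k → k ≤ K → ∀ s, d ≤ deriv (φ k) s - deriv (φ (k - 1)) s)
    (hAlip : ∀ k ≤ K, ∀ s τ, |A k (s + τ) - A k s| ≤ ε1 * |τ| * A k s)
    (hφ'' : ∀ k, 1 ≤ k → k ≤ K → ∀ s, |deriv (deriv (φ k)) s| ≤ ε2)
    (hx : ∀ s, x s = ∑ k ∈ Finset.range (K + 1), xcomp A φ k s)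
    (hgint : Integrable g)
    (hgL2 : MemLp g 2 (volume : Measure ℝ))
    (hgI1 : Integrable fun τ : ℝ => τ * g τ)
    (hgI2 : Integrable fun τ : ℝ => τ ^ 2 * g τ)
    (hgnorm : (∫ τ : ℝ, g τ) = 1)
    (hgeven : ∀ ξ, ‖hatg g (-ξ)‖ = ‖hatg g ξ‖)
    (hgdec : ∀ ξ1 ξ2, 0 ≤ ξ1 → ξ1 ≤ ξ2 → ‖hatg g ξ2‖ ≤ ‖hatg g ξ1‖)
    (hτ0 : 0 < τ0) (hτ0' : τ0 < 1)
    (hα : 0 < α) (hgα : ‖hatg g α‖ = τ0)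
    (hσ : ∀ s, 0 < σ s)
    (hsep : ∀ s, ∀ k, 1 ≤ k → k ≤ K →
      2 * α / (deriv (φ k) s - deriv (φ (k - 1)) s) ≤ σ s)
    (hmain : 2 * Msum K A t * (τ0 + lam0 g σ ε1 ε2 t) ≤ muMin K A t)
    (heps1 : Msum K A t * (τ0 + lam0 g σ ε1 ε2 t) ≤ epst)
    (heps2 : epst ≤ muMin K A t - Msum K A t * (τ0 + lam0 g σ ε1 ε2 t))
    (ginv : ℝ → ℝ)
    (hginv : ∀ ξ, 0 ≤ ξ → ginv ‖hatg g ξ‖ = ξ)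
    (ηhat : ℕ → ℝ)
    (hηmem : ∀ l, 1 ≤ l → l ≤ K → ηhat l ∈ Gtk x g σ φ α t epst l)
    (hηmax : ∀ l, 1 ≤ l → l ≤ K → ∀ η ∈ Gtk x g σ φ α t epst l,
      ‖aSTFT x g σ t η‖ ≤ ‖aSTFT x g σ t (ηhat l)‖)
    (hη0 : ηhat 0 = 0)
    :
    ∀ l ≤ K,
      ‖aSTFT x g σ t (ηhat l) - xcomp A φ l t‖ ≤
        errl K A g σ α ε1 ε2 l t +
          2 * π * momentI g 1 * A l t *
            ginv (1 - 2 * errl K A g σ α ε1 ε2 l t / A l t) :=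
  thm2_1c_general K A φ ε1 ε2 x g σ τ0 α t epst hε2 hAreg hAbdd hφreg hφ0 hApos hφ'pos hfreq hAlip
    hφ'' hx hgint hgI1 hgI2 hgnorm hgeven hgdec hτ0 hα hgα hσ hsep hmain heps2 ginv hginv ηhat hηmem
    hηmax hη0
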